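/- arXiv:2112.07907 — 4 statements merged into one kernel-verified Lean document; each statement's English description precedes it below -/
import Mathlib

section
/- Let k_1, ..., k_n be non-negative integers and m = k_1 + ... + k_n. There exist families F_1, ..., F_n of convex sets in R^{n+m} with |F_i| = k_i + 2, satisfying the colorful intersection property, such that no F_i admits a k_i-transversal. Concretely, take a set X of 2n+m points in general position in R^{n+m}, partitioned as X = X_1 ∪ ... ∪ X_n with |X_i| = k_i + 2, and let F_i consist of the fibers π_i^{-1}(x) for x ∈ X_i, where π_i is the orthogonal projection onto the affine span of X_i. -/
/-!
Split the coordinates of `ℝ^{n+m}` into blocks `ℝ^{k i + 1}` and let `F i` be the fibers of the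
projection onto block `i` over the `k i + 2` vertices of a simplex in that block. Fibers over
different blocks meet, because the block projections are jointly surjective. An affine subspace
meeting every fiber of `F i` projects onto a subspace containing the whole simplex, so its
direction has dimension at least `k i + 1`.
-/

open Module

theorem finrank_vectorSpan_le_finrank_direction_of_subset_image {k V P V₂ P₂ : Type*}
    [DivisionRing k] [AddCommGroup V] [Module k V] [AddTorsor V P]
    [AddCommGroup V₂] [Module k V₂] [AddTorsor V₂ P₂]
    (f : P →ᵃ[k] P₂) (s : AffineSubspace k P) [FiniteDimensional k s.direction] {t : Set P₂}
    (ht : t ⊆ f '' s) : finrank k (vectorSpan k t) ≤ finrank k s.direction := by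
  have hle : vectorSpan k t ≤ s.direction.map f.linear := by
    rw [AffineSubspace.direction_eq_vectorSpan, AffineMap.map_vectorSpan]
    exact vectorSpan_mono k ht
  exact (Submodule.finrank_mono hle).trans (Submodule.finrank_map_le _ _)

section BlockFibers

variable {𝕜 E : Type*} {ι : Type*} {κ : ι → Type*} {V : ι → Type*}
  [AddCommGroup E] [∀ i, AddCommGroup (V i)]

def blockFiber [Semiring 𝕜] [Module 𝕜 E] [∀ i, Module 𝕜 (V i)]
    (φ : E →ₗ[𝕜] (i : ι) → V i) (p : (i : ι) → κ i → V i) (i : ι) (j : κ i) : Set E :=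
  {x | φ x i = p i j}

theorem convex_blockFiber [Semiring 𝕜] [PartialOrder 𝕜] [Module 𝕜 E] [∀ i, Module 𝕜 (V i)]
    (φ : E →ₗ[𝕜] (i : ι) → V i) (p : (i : ι) → κ i → V i) (i : ι) (j : κ i) :
    Convex 𝕜 (blockFiber φ p i j) :=
  (convex_singleton (p i j)).linear_preimage (LinearMap.proj i ∘ₗ φ)

theorem iInter_blockFiber_nonempty [Semiring 𝕜] [Module 𝕜 E] [∀ i, Module 𝕜 (V i)]
    {φ : E →ₗ[𝕜] (i : ι) → V i} (hφ : Function.Surjective φ) (p : (i : ι) → κ i → V i)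
    (C : (i : ι) → κ i) : (⋂ i, blockFiber φ p i (C i)).Nonempty := by
  obtain ⟨x, hx⟩ := hφ fun i => p i (C i)
  exact ⟨x, Set.mem_iInter.mpr fun i => congr_fun hx i⟩

theorem card_le_finrank_direction_add_one_of_meets_blockFiber [DivisionRing 𝕜] [Module 𝕜 E]
    [∀ i, Module 𝕜 (V i)] [Fintype (κ i)] (φ : E →ₗ[𝕜] (i : ι) → V i)
    {p : (i : ι) → κ i → V i} (hp : AffineIndependent 𝕜 (p i))
    (s : AffineSubspace 𝕜 E) [FiniteDimensional 𝕜 s.direction]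
    (hs : ∀ j, ((s : Set E) ∩ blockFiber φ p i j).Nonempty) :
    Fintype.card (κ i) ≤ finrank 𝕜 s.direction + 1 := by
  rcases isEmpty_or_nonempty (κ i) with _ | _
  · simp
  have hsub : Set.range (p i) ⊆ (LinearMap.proj i ∘ₗ φ).toAffineMap '' s := by
    rintro _ ⟨j, rfl⟩
    obtain ⟨x, hxs, hx⟩ := hs j
    exact ⟨x, hxs, hx⟩
  rw [← hp.finrank_vectorSpan_add_one]
  exact Nat.add_le_add_right
    (finrank_vectorSpan_le_finrank_direction_of_subset_image _ s hsub) 1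

end BlockFibers

theorem stmt10_general (n : ℕ) (k : Fin n → ℕ) :
    ∃ F : (i : Fin n) → Fin (k i + 2) → Set (Fin (n + ∑ i, k i) → ℝ),
      (∀ i j, Convex ℝ (F i j)) ∧
      (∀ C : (i : Fin n) → Fin (k i + 2), (⋂ i, F i (C i)).Nonempty) ∧
      (∀ i : Fin n, ¬ ∃ γ : AffineSubspace ℝ (Fin (n + ∑ i, k i) → ℝ),
        Module.finrank ℝ γ.direction ≤ k i ∧
        ∀ j, ((γ : Set (Fin (n + ∑ i, k i) → ℝ)) ∩ F i j).Nonempty) := by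
  have hcard : Fintype.card (Σ i : Fin n, Fin (k i + 1)) = n + ∑ i, k i := by
    simp [Finset.sum_add_distrib, Nat.add_comm]
  let L := (LinearEquiv.funCongrLeft ℝ ℝ (Fintype.equivFinOfCardEq hcard)).trans
    (LinearEquiv.piCurry ℝ fun _ _ => ℝ)
  have hsimplex (i : Fin n) : ∃ p : Fin (k i + 2) → Fin (k i + 1) → ℝ, AffineIndependent ℝ p := by
    obtain ⟨b⟩ := AffineBasis.exists_affineBasis_of_finiteDimensional
      (ι := Fin (k i + 2)) (k := ℝ) (P := Fin (k i + 1) → ℝ) (by simp)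
    exact ⟨b, b.ind⟩
  choose p hp using hsimplex
  refine ⟨blockFiber L.toLinearMap p, convex_blockFiber _ p,
    iInter_blockFiber_nonempty L.surjective p, ?_⟩
  rintro i ⟨γ, hγ, hmeets⟩
  have hbound := card_le_finrank_direction_add_one_of_meets_blockFiber _ (hp i) γ hmeets
  rw [Fintype.card_fin] at hbound
  omega

/-- Optimality of the dimension in the main theorem: in `ℝ^{n+m}` there are
families `F i` of `k i + 2` convex sets with the colorful intersection property
such that no `F i` admits a `k i`-transversal. -/
theorem stmt10 (n : ℕ) (hn : 1 ≤ n) (k : Fin n → ℕ) :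
    ∃ F : (i : Fin n) → Fin (k i + 2) → Set (Fin (n + ∑ i, k i) → ℝ),
      (∀ i j, Convex ℝ (F i j)) ∧
      (∀ C : (i : Fin n) → Fin (k i + 2), (⋂ i, F i (C i)).Nonempty) ∧
      (∀ i : Fin n, ¬ ∃ γ : AffineSubspace ℝ (Fin (n + ∑ i, k i) → ℝ),
        Module.finrank ℝ γ.direction ≤ k i ∧
        ∀ j, ((γ : Set (Fin (n + ∑ i, k i) → ℝ)) ∩ F i j).Nonempty) :=
  stmt10_general n k
end

section
/- Let F_1 = {A_1, A_2} and F_2 = {B_1, B_2} and F_3 = {C_1, C_2} be pairs of convex sets in R^2 such that A_i ∩ B_j ∩ C_k ≠ ∅ for all i, j, k ∈ {1,2}. Then A_1 ∩ A_2 ≠ ∅, or B_1 ∩ B_2 ≠ ∅, or C_1 ∩ C_2 ≠ ∅. -/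
/-!
Suppose no pair meets. Pick a point in each of the eight colorful intersections and, for each
color, strictly separate the four points lying in its first set from the four lying in its second
by a line `f x = a x`. The eight points then realize every sign pattern of the three affine
functions `f x - a x`. Three linear functionals on the plane are linearly dependent, say
`∑ c x • f x = 0` with `c ≠ 0`; evaluating at the point whose pattern matches the signs of `c`
gives `∑ c x * a x < 0`, and doing the same for `-c` gives the opposite inequality.
-/

open Module

theorem exists_strictSep_of_disjoint_convexHull {E : Type*} [TopologicalSpace E]
    [AddCommGroup E] [IsTopologicalAddGroup E] [Module ℝ E] [ContinuousSMul ℝ E]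
    [LocallyConvexSpace ℝ E] [T2Space E] {S T : Set E} (hS : S.Finite) (hT : T.Finite)
    (hST : Disjoint (convexHull ℝ S) (convexHull ℝ T)) :
    ∃ (f : StrongDual ℝ E) (a : ℝ), (∀ y ∈ S, f y < a) ∧ ∀ y ∈ T, a < f y := by
  obtain ⟨f, u, v, hfu, huv, hfv⟩ := geometric_hahn_banach_compact_closed
    (convex_convexHull ℝ S) (hS.isCompact_convexHull ℝ)
    (convex_convexHull ℝ T) (hT.isClosed_convexHull ℝ) hST
  exact ⟨f, u, fun y hy => hfu y (subset_convexHull ℝ S hy),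
    fun y hy => huv.trans (hfv y (subset_convexHull ℝ T hy))⟩

theorem sum_mul_lt_zero_of_forall_sign_pattern {ι α : Type*} [Fintype ι] {f : ι → α → ℝ} {a : ι → ℝ}
    (h : ∀ s : ι → Fin 2, ∃ y, ∀ x, (s x = 0 → f x y < a x) ∧ (s x = 1 → a x < f x y))
    {c : ι → ℝ} (hc : ∀ y, ∑ x, c x * f x y = 0) {x₀ : ι} (hx₀ : c x₀ ≠ 0) :
    ∑ x, c x * a x < 0 := by
  obtain ⟨y, hy⟩ := h fun x => if 0 < c x then 1 else 0
  have hle : ∀ x, c x * a x ≤ c x * f x y ∧ (c x ≠ 0 → c x * a x < c x * f x y) := by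
    intro x
    rcases lt_trichotomy (c x) 0 with hneg | hzero | hpos
    · have hlt := (hy x).1 (by simp [hneg.not_gt])
      exact ⟨(mul_lt_mul_of_neg_left hlt hneg).le, fun _ => mul_lt_mul_of_neg_left hlt hneg⟩
    · simp [hzero]
    · have hlt := (hy x).2 (by simp [hpos])
      exact ⟨(mul_lt_mul_of_pos_left hlt hpos).le, fun _ => mul_lt_mul_of_pos_left hlt hpos⟩
  calc ∑ x, c x * a x < ∑ x, c x * f x y :=
        Finset.sum_lt_sum (fun x _ => (hle x).1) ⟨x₀, Finset.mem_univ _, (hle x₀).2 hx₀⟩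
    _ = 0 := hc y

theorem linearIndependent_of_forall_sign_pattern {ι E : Type*} [Fintype ι] [AddCommGroup E]
    [Module ℝ E] {f : ι → Dual ℝ E} {a : ι → ℝ}
    (h : ∀ s : ι → Fin 2, ∃ y, ∀ x, (s x = 0 → f x y < a x) ∧ (s x = 1 → a x < f x y)) :
    LinearIndependent ℝ f := by
  rw [Fintype.linearIndependent_iff]
  intro c hc x₀
  by_contra hx₀
  have hc' : ∀ y, ∑ x, c x * f x y = 0 := fun y => by
    simpa using LinearMap.congr_fun hc y
  have hneg : ∀ y, ∑ x, -c x * f x y = 0 := fun y => by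
    simp only [neg_mul, Finset.sum_neg_distrib, hc', neg_zero]
  have h₁ := sum_mul_lt_zero_of_forall_sign_pattern h hc' hx₀
  have h₂ := sum_mul_lt_zero_of_forall_sign_pattern h hneg (neg_ne_zero.2 hx₀)
  simp only [neg_mul, Finset.sum_neg_distrib] at h₂
  linarith

theorem exists_inter_nonempty_of_colorful {ι E : Type*} [Fintype ι] [NormedAddCommGroup E]
    [NormedSpace ℝ E] [FiniteDimensional ℝ E] (hcard : finrank ℝ E < Fintype.card ι)
    (D : ι → Fin 2 → Set E) (hD : ∀ x i, Convex ℝ (D x i))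
    (hcol : ∀ s : ι → Fin 2, (⋂ x, D x (s x)).Nonempty) :
    ∃ x, (D x 0 ∩ D x 1).Nonempty := by
  by_contra! hdisj
  choose p hp using hcol
  have hpD : ∀ s x, p s ∈ D x (s x) := fun s => Set.mem_iInter.1 (hp s)
  have hsep : ∀ x, ∃ (f : StrongDual ℝ E) (a : ℝ),
      ∀ s, (s x = 0 → f (p s) < a) ∧ (s x = 1 → a < f (p s)) := by
    intro x
    have hsub : ∀ i, convexHull ℝ (p '' {s | s x = i}) ⊆ D x i := fun i =>
      convexHull_min (by rintro _ ⟨s, rfl, rfl⟩; exact hpD s x) (hD x i)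
    obtain ⟨f, a, hS, hT⟩ := exists_strictSep_of_disjoint_convexHull
      (Set.toFinite (p '' {s | s x = 0})) (Set.toFinite (p '' {s | s x = 1}))
      (Set.disjoint_iff_inter_eq_empty.2 (hdisj x) |>.mono (hsub 0) (hsub 1))
    exact ⟨f, a, fun s => ⟨fun hs => hS _ ⟨s, hs, rfl⟩, fun hs => hT _ ⟨s, hs, rfl⟩⟩⟩
  choose f a hfa using hsep
  have hind : LinearIndependent ℝ fun x => (f x : Dual ℝ E) :=
    linearIndependent_of_forall_sign_pattern fun s => ⟨p s, fun x => hfa x s⟩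
  have := hind.fintype_card_le_finrank
  rw [Subspace.dual_finrank_eq] at this
  omega

/-- Three pairs of convex sets in the plane with the colorful intersection
property: some pair has intersecting members. -/
theorem stmt13 (A B C : Fin 2 → Set (Fin 2 → ℝ))
    (hA : ∀ i, Convex ℝ (A i)) (hB : ∀ i, Convex ℝ (B i)) (hC : ∀ i, Convex ℝ (C i))
    (hcol : ∀ i j k : Fin 2, (A i ∩ B j ∩ C k).Nonempty) :
    (A 0 ∩ A 1).Nonempty ∨ (B 0 ∩ B 1).Nonempty ∨ (C 0 ∩ C 1).Nonempty := by
  have hcard : finrank ℝ (Fin 2 → ℝ) < Fintype.card (Fin 3) := by simp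
  have hD : ∀ x i, Convex ℝ (![A, B, C] x i) := by
    intro x; fin_cases x <;> assumption
  obtain ⟨x, hx⟩ := exists_inter_nonempty_of_colorful hcard ![A, B, C] hD fun s => by
    obtain ⟨y, ⟨hyA, hyB⟩, hyC⟩ := hcol (s 0) (s 1) (s 2)
    refine ⟨y, Set.mem_iInter.2 fun x => ?_⟩
    fin_cases x <;> assumption
  fin_cases x
  exacts [Or.inl hx, Or.inr (Or.inl hx), Or.inr (Or.inr hx)]
end

section
/- Let F_1 be a family of 3 convex sets and F_2 a family of 2 convex sets in R^2, such that C ∩ D ≠ ∅ for every C ∈ F_1 and D ∈ F_2. Then F_1 admits a line transversal (a line meeting all three sets of F_1), or the two sets of F_2 intersect. -/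
/-!
Pick `p i j ∈ F₁ i ∩ F₂ j`. The convex hulls of `{p i 0}` and of `{p i 1}` lie in `F₂ 0`
and `F₂ 1` respectively, so if they meet we are done. Otherwise a linear functional `f`
strictly separates them, and by the intermediate value theorem the level line `f = u`
between the two hulls crosses every segment `[p i 0, p i 1]`, which lies in the convex set
`F₁ i`.
-/

open Set

theorem LinearMap.exists_affineSubspace_coe_eq_preimage_singleton {K E : Type*}
    [Field K] [AddCommGroup E] [Module K E] [FiniteDimensional K E] {f : E →ₗ[K] K}
    (hf : f ≠ 0) (u : K) :
    ∃ γ : AffineSubspace K E, Module.finrank K γ.direction + 1 = Module.finrank K E ∧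
      (γ : Set E) = f ⁻¹' {u} := by
  have hsurj := LinearMap.surjective_of_ne_zero hf
  obtain ⟨x₀, hx₀⟩ := hsurj u
  refine ⟨AffineSubspace.mk' x₀ (LinearMap.ker f), ?_, ?_⟩
  · rw [AffineSubspace.direction_mk', ← f.finrank_range_add_finrank_ker,
      LinearMap.range_eq_top.2 hsurj, finrank_top, Module.finrank_self, add_comm]
  · ext x
    simp [AffineSubspace.mem_mk', hx₀, sub_eq_zero]

theorem exists_hyperplane_meets_segments_of_disjoint_convexHull {E ι : Type*}
    [NormedAddCommGroup E] [NormedSpace ℝ E] [FiniteDimensional ℝ E] [Finite ι] [Nonempty ι]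
    {a b : ι → E} (hd : Disjoint (convexHull ℝ (range a)) (convexHull ℝ (range b))) :
    ∃ γ : AffineSubspace ℝ E, Module.finrank ℝ γ.direction + 1 = Module.finrank ℝ E ∧
      ∀ i, ((γ : Set E) ∩ segment ℝ (a i) (b i)).Nonempty := by
  obtain ⟨f, u, v, hfa, huv, hfb⟩ := geometric_hahn_banach_compact_closed
    (convex_convexHull ℝ _) ((finite_range a).isCompact_convexHull ℝ)
    (convex_convexHull ℝ _) ((finite_range b).isCompact_convexHull ℝ).isClosed hd
  have ha i : f (a i) < u := hfa _ (subset_convexHull ℝ _ (mem_range_self i))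
  have hb i : v < f (b i) := hfb _ (subset_convexHull ℝ _ (mem_range_self i))
  have hf : (f : E →ₗ[ℝ] ℝ) ≠ 0 := by
    intro h0
    obtain ⟨i⟩ := ‹Nonempty ι›
    have := (ha i).trans (huv.trans (hb i))
    simp [← ContinuousLinearMap.coe_coe, h0] at this
  obtain ⟨γ, hdim, hγ⟩ :=
    LinearMap.exists_affineSubspace_coe_eq_preimage_singleton hf u
  refine ⟨γ, hdim, fun i => ?_⟩
  obtain ⟨x, hx, hfx⟩ := (convex_segment (a i) (b i)).isPreconnected.intermediate_value
    (left_mem_segment ℝ _ _) (right_mem_segment ℝ _ _) f.continuous.continuousOn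
    ⟨(ha i).le, (huv.trans (hb i)).le⟩
  exact ⟨x, by simpa [hγ] using hfx, hx⟩

/-- Three convex sets `F₁` and two convex sets `F₂` in the plane, every member
of `F₁` meeting every member of `F₂`: then `F₁` has a line transversal or the
two members of `F₂` intersect. -/
theorem stmt14 (F₁ : Fin 3 → Set (Fin 2 → ℝ)) (F₂ : Fin 2 → Set (Fin 2 → ℝ))
    (h₁ : ∀ i, Convex ℝ (F₁ i)) (h₂ : ∀ j, Convex ℝ (F₂ j))
    (hcol : ∀ i j, (F₁ i ∩ F₂ j).Nonempty) :
    (∃ γ : AffineSubspace ℝ (Fin 2 → ℝ), Module.finrank ℝ γ.direction = 1 ∧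
        ∀ i, ((γ : Set (Fin 2 → ℝ)) ∩ F₁ i).Nonempty) ∨
    (F₂ 0 ∩ F₂ 1).Nonempty := by
  choose p hp₁ hp₂ using hcol
  have hull_subset j : convexHull ℝ (range fun i => p i j) ⊆ F₂ j :=
    (h₂ j).convexHull_subset_iff.2 (range_subset_iff.2 fun i => hp₂ i j)
  by_cases hd : Disjoint (convexHull ℝ (range fun i => p i 0))
      (convexHull ℝ (range fun i => p i 1))
  · obtain ⟨γ, hdim, hγ⟩ := exists_hyperplane_meets_segments_of_disjoint_convexHull hd
    rw [Module.finrank_fin_fun] at hdim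
    refine .inl ⟨γ, by omega, fun i => (hγ i).mono ?_⟩
    exact inter_subset_inter_right _ ((h₁ i).segment_subset (hp₁ i 0) (hp₁ i 1))
  · obtain ⟨x, hx₀, hx₁⟩ := not_disjoint_iff.1 hd
    exact .inr ⟨x, hull_subset 0 hx₀, hull_subset 1 hx₁⟩
end

section
/- Let F_1, ..., F_n be families of convex sets in R^d satisfying the colorful intersection property with n = d. Then for every unit vector u ∈ R^d there exists an index i such that the members of F_i can all be intersected by a single line with direction u. -/
/-!
Project along `u` onto `ℝ^d ⧸ ℝ ∙ u`, a space of dimension `d - 1`: images of convex sets are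
convex, the colorful intersection property survives, and a point `q` common to all images of one
family lifts to a line `p + ℝ u` meeting every member of that family. So it suffices to prove the
colorful Helly theorem (`d - 1 + 1` families in dimension `d - 1`).

For colorful Helly we may replace every set by the convex hull of finitely many colorful witnesses,
making all sets compact. For a colorful choice `C` let `y C` be the lexicographically least point
of `⋂ i, G i (C i)` and take `C` with `y C` lexicographically largest. If no family has a common
point, each color `i` has a member `D i` missing `y C`; swapping `C i` for `D i` gives a choice
whose least point lies strictly below `y C`. Radon's theorem applied to `y C` and these `d` points
yields a point of `⋂ i, G i (C i)` below `y C`, since strict lexicographic lower sets are convex.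
-/

open Set Module Function

instance Pi.Lex.posSMulStrictMono {ι 𝕜 : Type*} {α : ι → Type*} [LinearOrder ι] [Zero 𝕜]
    [PartialOrder 𝕜] [∀ i, Zero (α i)] [∀ i, PartialOrder (α i)] [∀ i, SMulWithZero 𝕜 (α i)]
    [∀ i, PosSMulStrictMono 𝕜 (α i)] : PosSMulStrictMono 𝕜 (Lex (∀ i, α i)) where
  smul_lt_smul_of_pos_left a ha _ _ := fun ⟨i, hi, hlt⟩ =>
    ⟨i, fun j hj => congr_arg (a • ·) (hi j hj), smul_lt_smul_of_pos_left hlt ha⟩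

theorem convex_setOf_toLex_lt {n : ℕ} (c : Fin n → ℝ) :
    Convex ℝ {x : Fin n → ℝ | toLex x < toLex c} :=
  (convex_Iio (toLex c)).linear_preimage (toLexLinearEquiv ℝ (Fin n → ℝ)).toLinearMap

theorem IsCompact.exists_forall_toLex_le {n : ℕ} {K : Set (Fin n → ℝ)} (hK : IsCompact K)
    (hne : K.Nonempty) : ∃ y ∈ K, ∀ x ∈ K, toLex y ≤ toLex x := by
  induction n with
  | zero => exact hne.imp fun y hy => ⟨hy, fun x _ => (congr_arg toLex (Subsingleton.elim y x)).le⟩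
  | succ n ih =>
    obtain ⟨y₀, hy₀K, hy₀⟩ := hK.exists_isMinOn hne (continuous_apply 0).continuousOn
    set K₀ := K ∩ (· 0) ⁻¹' {y₀ 0}
    have hK₀ : IsCompact K₀ := hK.inter_right (isClosed_singleton.preimage (continuous_apply 0))
    obtain ⟨_, ⟨y, hyK₀, rfl⟩, hy⟩ :=
      ih (hK₀.image (continuous_pi fun i => continuous_apply i.succ))
        ⟨Fin.tail y₀, y₀, ⟨hy₀K, rfl⟩, rfl⟩
    refine ⟨y, hyK₀.1, fun x hx => not_lt.1 fun hxy => ?_⟩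
    change Pi.Lex _ _ x y at hxy
    rw [← Fin.cons_self_tail x, ← Fin.cons_self_tail y, Fin.pi_lex_lt_cons_cons] at hxy
    rcases hxy with hlt | ⟨heq, htail⟩
    · have hy0 : y 0 = y₀ 0 := hyK₀.2
      exact (show y₀ 0 ≤ x 0 from hy₀ hx).not_gt (hy0 ▸ hlt)
    · exact (hy _ ⟨x, ⟨hx, heq.trans hyK₀.2⟩, rfl⟩).not_gt htail

theorem exists_mem_inter_iInter_of_finrank_lt {E ι : Type*} [AddCommGroup E]
    [Module ℝ E] [FiniteDimensional ℝ E] [Fintype ι] (hι : finrank ℝ E < Fintype.card ι)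
    {A : ι → Set E} (hA : ∀ i, Convex ℝ (A i)) {S : Set E} (hS : Convex ℝ S) {x₀ : E}
    (hx₀ : ∀ i, x₀ ∈ A i) {x : ι → E} (hxA : ∀ i k, k ≠ i → x i ∈ A k) (hxS : ∀ i, x i ∈ S) :
    ∃ z ∈ S, ∀ i, z ∈ A i := by
  set p : Option ι → E := fun o => o.elim x₀ x
  have hp : ¬AffineIndependent ℝ p := fun h => by
    have := h.card_le_finrank_succ
    rw [Fintype.card_option] at this
    have := Submodule.finrank_le (vectorSpan ℝ (range p))
    omega
  obtain ⟨I, z, hzI, hzIc⟩ := Convex.radon_partition hp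
  have hz : ∀ o, ∀ T : Set E, Convex ℝ T → (∀ o' ≠ o, p o' ∈ T) → z ∈ T := by
    intro o T hT hpT
    by_cases ho : o ∈ I
    · refine convexHull_min (image_subset_iff.2 fun o' (ho' : o' ∉ I) => ?_) hT hzIc
      exact hpT o' fun h => ho' (h ▸ ho)
    · exact convexHull_min (image_subset_iff.2 fun o' ho' => hpT o' (ne_of_mem_of_not_mem ho' ho))
        hT hzI
  refine ⟨z, hz none S hS ?_, fun k => hz (some k) (A k) (hA k) ?_⟩
  · rintro (_ | i) h
    exacts [absurd rfl h, hxS i]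
  · rintro (_ | i) h
    exacts [hx₀ k, hxA i k fun hki => h (hki ▸ rfl)]

def HasColorfulIntersection {ι E : Type*} {κ : ι → Type*} (F : (i : ι) → κ i → Set E) : Prop :=
  ∀ C : (i : ι) → κ i, (⋂ i, F i (C i)).Nonempty

theorem HasColorfulIntersection.exists_nonempty_iInter_of_isCompact {m : ℕ} {ι : Type*}
    [Fintype ι] {κ : ι → Type*} [∀ i, Finite (κ i)] (hι : m < Fintype.card ι)
    {G : (i : ι) → κ i → Set (Fin m → ℝ)} (hcol : HasColorfulIntersection G)
    (hconv : ∀ i j, Convex ℝ (G i j)) (hcpt : ∀ i j, IsCompact (G i j)) :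
    ∃ i, (⋂ j, G i j).Nonempty := by
  classical
  by_contra! hG
  have : ∀ i, Nonempty (κ i) := fun i => by
    by_contra! h
    simpa using hG i
  have : Nonempty ι := Fintype.card_pos_iff.1 (by omega)
  have hKcpt (C : (i : ι) → κ i) : IsCompact (⋂ i, G i (C i)) :=
    (hcpt _ _).of_isClosed_subset (isClosed_iInter fun i => (hcpt i (C i)).isClosed)
      (iInter_subset _ (Classical.arbitrary ι))
  choose y hyK hymin using fun C => (hKcpt C).exists_forall_toLex_le (hcol C)
  obtain ⟨C, hC⟩ := Finite.exists_max fun C => toLex (y C)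
  have hD (i : ι) : ∃ j, y C ∉ G i j := by simpa using eq_empty_iff_forall_notMem.1 (hG i) (y C)
  choose D hD using hD
  set C' : ι → (i : ι) → κ i := fun i => update C i (D i)
  have hC'_mem (i k : ι) : y (C' i) ∈ G k (C' i k) := mem_iInter.1 (hyK (C' i)) k
  obtain ⟨z, hzlt, hzK⟩ := exists_mem_inter_iInter_of_finrank_lt
    ((finrank_fin_fun ℝ).trans_lt hι) (fun k => hconv k (C k)) (convex_setOf_toLex_lt (y C))
    (mem_iInter.1 (hyK C)) (x := fun i => y (C' i))
    (fun i k hki => by simpa [C', update_of_ne hki] using hC'_mem i k)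
    fun i => (hC (C' i)).lt_of_ne fun h => hD i <| by
      simpa [← toLex_inj.1 h, C'] using hC'_mem i i
  exact (hymin C z (mem_iInter.2 hzK)).not_gt hzlt

theorem HasColorfulIntersection.exists_nonempty_iInter {E ι : Type*} [AddCommGroup E]
    [Module ℝ E] [FiniteDimensional ℝ E] [Fintype ι] {κ : ι → Type*} [∀ i, Finite (κ i)]
    (hι : finrank ℝ E < Fintype.card ι) {F : (i : ι) → κ i → Set E}
    (hcol : HasColorfulIntersection F) (hconv : ∀ i j, Convex ℝ (F i j)) :
    ∃ i, (⋂ j, F i j).Nonempty := by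
  choose w hw using hcol
  set e := (finBasis ℝ E).equivFun
  set G : (i : ι) → κ i → Set (Fin (finrank ℝ E) → ℝ) :=
    fun i j => convexHull ℝ (e ∘ w '' {C | C i = j})
  have hwG (C : (i : ι) → κ i) (i : ι) : e (w C) ∈ G i (C i) :=
    subset_convexHull ℝ _ ⟨C, rfl, rfl⟩
  have hGF (i : ι) (j : κ i) : G i j ⊆ e '' F i j := by
    refine convexHull_min ?_ ((hconv i j).linear_image e.toLinearMap)
    rintro _ ⟨C, rfl, rfl⟩
    exact mem_image_of_mem e (mem_iInter.1 (hw C) i)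
  obtain ⟨i, z, hz⟩ := HasColorfulIntersection.exists_nonempty_iInter_of_isCompact hι
    (fun C => ⟨_, mem_iInter.2 (hwG C)⟩) (fun i j => convex_convexHull ℝ _)
    (fun i j => ((toFinite _).image _).isCompact_convexHull ℝ)
  refine ⟨i, e.symm z, mem_iInter.2 fun j => ?_⟩
  obtain ⟨x, hx, rfl⟩ := hGF i j (mem_iInter.1 hz j)
  simpa using hx

theorem exists_forall_add_smul_mem_of_nonempty_iInter_image_mkQ {R M κ : Type*} [Ring R]
    [AddCommGroup M] [Module R M] {S : κ → Set M} {u : M}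
    (h : (⋂ j, (R ∙ u).mkQ '' S j).Nonempty) : ∃ p : M, ∀ j, ∃ t : R, p + t • u ∈ S j := by
  obtain ⟨q, hq⟩ := h
  obtain ⟨p, rfl⟩ := (R ∙ u).mkQ_surjective q
  refine ⟨p, fun j => ?_⟩
  obtain ⟨x, hx, hxp⟩ := mem_iInter.1 hq j
  obtain ⟨t, ht⟩ := Submodule.mem_span_singleton.1 ((Submodule.Quotient.eq _).1 hxp)
  exact ⟨t, by rwa [ht, add_sub_cancel]⟩

/-- `d` families of convex sets in `ℝ^d` (each finite) with the colorful
intersection property: for every unit direction `u` some family can be met by a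
single line in direction `u`. -/
theorem stmt15 (d : ℕ) (s : Fin d → ℕ)
    (F : (i : Fin d) → Fin (s i) → Set (EuclideanSpace ℝ (Fin d)))
    (hconv : ∀ i j, Convex ℝ (F i j))
    (hcol : ∀ C : (i : Fin d) → Fin (s i), (⋂ i, F i (C i)).Nonempty)
    (u : EuclideanSpace ℝ (Fin d)) (hu : ‖u‖ = 1) :
    ∃ i : Fin d, ∃ p : EuclideanSpace ℝ (Fin d),
      ∀ j, ∃ t : ℝ, p + t • u ∈ F i j := by
  set π := (ℝ ∙ u).mkQ
  have hdim : finrank ℝ (EuclideanSpace ℝ (Fin d) ⧸ ℝ ∙ u) < Fintype.card (Fin d) := by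
    have := (ℝ ∙ u).finrank_quotient_add_finrank
    rw [finrank_span_singleton (norm_ne_zero_iff.1 (hu ▸ one_ne_zero)),
      finrank_euclideanSpace_fin] at this
    simp only [Fintype.card_fin]
    omega
  have hcolπ : HasColorfulIntersection fun i j => π '' F i j := fun C =>
    (hcol C).image π |>.mono (image_iInter_subset _ _)
  obtain ⟨i, hi⟩ := hcolπ.exists_nonempty_iInter hdim fun i j => (hconv i j).linear_image π
  exact ⟨i, exists_forall_add_smul_mem_of_nonempty_iInter_image_mkQ hi⟩
end
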